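/- Let D : ℤ × ℤ → ℝ be any function satisfying, for all (m,n) ∈ ℤ², the tropical (max-plus) system: D_{m+1,n+2} + D_{m,n-1} = max(D_{m+1,n+1} + D_{m,n}, D_{m+1,n} + D_{m,n+1}); D_{m,n+2} + D_{m+1,n-1} = max(D_{m,n+1} + D_{m+1,n}, D_{m+1,n+1} + D_{m,n}); D_{m+2,n+1} + D_{m,n} = max(D_{m+1,n+1} + D_{m+1,n}, D_{m+1,n+2} + D_{m+1,n-1}); D_{m+2,n} + D_{m,n+1} = max(D_{m+1,n+1} + D_{m+1,n}, D_{m+1,n+2} + D_{m+1,n-1}). Then D satisfies the linear difference equation of order 6 in the first index, D_{m+6,n} − D_{m+5,n} − D_{m+4,n} + D_{m+2,n} + D_{m+1,n} − D_{m,n} = 0 for all (m,n), and the same linear difference equation in the second index, D_{m,n+6} − D_{m,n+5} − D_{m,n+4} + D_{m,n+2} + D_{m,n+1} − D_{m,n} = 0 for all (m,n). -/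
import Mathlib

/-- Auxiliary max computation: from the two tropical equations one can express
the "column" quantity `T - z` as a max of pairwise sums of row differences. -/
lemma aux_cform (x y z P Q R S T : ℝ)
    (A : R + x = max (P + y) (Q + z))
    (B : T + y = max (P + Q) (R + S)) :
    T - z = max ((Q - y) + (P - z)) ((S - x) + max (P - z) (Q - y)) := by
  rcases le_total (P + y) (Q + z) with h | h
  · rw [max_eq_right h] at A
    rw [max_eq_right (show P - z ≤ Q - y by linarith)]
    rcases le_total (P + Q) (R + S) with h2 | h2
    · rw [max_eq_right h2] at B
      rw [max_eq_right (show (Q - y) + (P - z) ≤ (S - x) + (Q - y) by linarith)]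
      linarith
    · rw [max_eq_left h2] at B
      rw [max_eq_left (show (S - x) + (Q - y) ≤ (Q - y) + (P - z) by linarith)]
      linarith
  · rw [max_eq_left h] at A
    rw [max_eq_left (show Q - y ≤ P - z by linarith)]
    rcases le_total (P + Q) (R + S) with h2 | h2
    · rw [max_eq_right h2] at B
      rw [max_eq_right (show (Q - y) + (P - z) ≤ (S - x) + (P - z) by linarith)]
      linarith
    · rw [max_eq_left h2] at B
      rw [max_eq_left (show (S - x) + (P - z) ≤ (Q - y) + (P - z) by linarith)]
      linarith

/-- Auxiliary: the "spread reflection" step — the second difference of the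
sequence `c` of column invariants vanishes. -/
lemma aux_w (a b d a' b' d' a'' b'' d'' c c₁ c₂ : ℝ)
    (h1 : c = max (b + d) (a + max d b))
    (h3 : c₂ = max (b'' + d'') (a'' + max d'' b''))
    (ra' : a' + a'' = c₁) (rb' : b' + b'' = c₁) (rd' : d' + d'' = c₁)
    (ra : a + a' = c) (rb : b + b' = c) (rd : d + d' = c) :
    c₂ - c₁ = c₁ - c := by
  rcases le_total d b with h4 | h4
  · rw [max_eq_right h4] at h1
    rw [max_eq_right (show d'' ≤ b'' by linarith)] at h3
    rcases le_total (b + d) (a + b) with h5 | h5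
    · rw [max_eq_right h5] at h1
      rw [max_eq_right (show b'' + d'' ≤ a'' + b'' by linarith)] at h3
      linarith
    · rw [max_eq_left h5] at h1
      rw [max_eq_left (show a'' + b'' ≤ b'' + d'' by linarith)] at h3
      linarith
  · rw [max_eq_left h4] at h1
    rw [max_eq_left (show b'' ≤ d'' by linarith)] at h3
    rcases le_total (b + d) (a + d) with h5 | h5
    · rw [max_eq_right h5] at h1
      rw [max_eq_right (show b'' + d'' ≤ a'' + d'' by linarith)] at h3
      linarith
    · rw [max_eq_left h5] at h1
      rw [max_eq_left (show a'' + d'' ≤ b'' + d'' by linarith)] at h3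
      linarith

/-- any solution of the tropical (max-plus) version of the bilinear
lattice system satisfies the same linear difference equation of order 6 in each
of the two lattice directions. -/
theorem tropical_lattice_linear_relation (D : ℤ → ℤ → ℝ)
    (e₁ : ∀ m n, D (m + 1) (n + 2) + D m (n - 1) =
      max (D (m + 1) (n + 1) + D m n) (D (m + 1) n + D m (n + 1)))
    (e₂ : ∀ m n, D m (n + 2) + D (m + 1) (n - 1) =
      max (D m (n + 1) + D (m + 1) n) (D (m + 1) (n + 1) + D m n))
    (e₃ : ∀ m n, D (m + 2) (n + 1) + D m n =
      max (D (m + 1) (n + 1) + D (m + 1) n) (D (m + 1) (n + 2) + D (m + 1) (n - 1)))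
    (e₄ : ∀ m n, D (m + 2) n + D m (n + 1) =
      max (D (m + 1) (n + 1) + D (m + 1) n) (D (m + 1) (n + 2) + D (m + 1) (n - 1))) :
    (∀ m n : ℤ, D (m + 6) n - D (m + 5) n - D (m + 4) n +
      D (m + 2) n + D (m + 1) n - D m n = 0) ∧
    (∀ m n : ℤ, D m (n + 6) - D m (n + 5) - D m (n + 4) +
      D m (n + 2) + D m (n + 1) - D m n = 0) := by
  -- Shifted clean versions of the equations (no `n - 1`).
  have E1s : ∀ m n : ℤ, D (m + 1) (n + 3) + D m n =
      max (D (m + 1) (n + 2) + D m (n + 1)) (D (m + 1) (n + 1) + D m (n + 2)) := by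
    intro m n
    have h := e₁ m (n + 1)
    rw [show n + 1 + 2 = n + 3 by ring, show n + 1 + 1 = n + 2 by ring,
      show n + 1 - 1 = n by ring] at h
    exact h
  have E3s : ∀ m n : ℤ, D (m + 2) (n + 2) + D m (n + 1) =
      max (D (m + 1) (n + 2) + D (m + 1) (n + 1)) (D (m + 1) (n + 3) + D (m + 1) n) := by
    intro m n
    have h := e₃ m (n + 1)
    rw [show n + 1 + 2 = n + 3 by ring, show n + 1 + 1 = n + 2 by ring,
      show n + 1 - 1 = n by ring] at h
    exact h
  -- `c(m,n) = D (m+2) n - D m n` is independent of `n` (one step).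
  have cc : ∀ m n : ℤ, D (m + 2) (n + 1) + D m n = D (m + 2) n + D m (n + 1) := by
    intro m n
    have h3 := e₃ m n
    have h4 := e₄ m n
    linarith
  -- the first-index difference is 3-periodic in the second index
  have hper' : ∀ m n : ℤ, D m (n + 3) - D (m - 1) (n + 3) = D m n - D (m - 1) n := by
    intro m n
    have A := e₁ (m - 1) (n + 1)
    rw [show m - 1 + 1 = m by ring, show n + 1 + 2 = n + 3 by ring,
      show n + 1 + 1 = n + 2 by ring, show n + 1 - 1 = n by ring] at A
    have B := e₂ (m - 1) (n + 1)
    rw [show m - 1 + 1 = m by ring, show n + 1 + 2 = n + 3 by ring,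
      show n + 1 + 1 = n + 2 by ring, show n + 1 - 1 = n by ring] at B
    rw [max_comm, add_comm (D (m - 1) (n + 2)) (D m (n + 1))] at B
    linarith
  -- the max-formula for the column invariant
  have cform : ∀ k n : ℤ, D (k + 2) (n + 2) - D k (n + 2) =
      max ((D (k + 1) (n + 1) - D k (n + 1)) + (D (k + 1) (n + 2) - D k (n + 2)))
        ((D (k + 1) n - D k n) +
          max (D (k + 1) (n + 2) - D k (n + 2)) (D (k + 1) (n + 1) - D k (n + 1))) :=
    fun k n => aux_cform _ _ _ _ _ _ _ _ (E1s k n) (E3s k n)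
  -- the second difference of `c` in the first index vanishes
  have winv : ∀ k n : ℤ,
      (D (k + 4) n - D (k + 2) n) - (D (k + 3) n - D (k + 1) n)
        = (D (k + 3) n - D (k + 1) n) - (D (k + 2) n - D k n) := by
    intro k n
    have t1 := cc k n
    have t2 := cc k (n + 1); rw [show n + 1 + 1 = n + 2 by ring] at t2
    have s1 := cc (k + 1) n; rw [show k + 1 + 2 = k + 3 by ring] at s1
    have s2 := cc (k + 1) (n + 1)
    rw [show n + 1 + 1 = n + 2 by ring, show k + 1 + 2 = k + 3 by ring] at s2
    have u1 := cc (k + 2) n; rw [show k + 2 + 2 = k + 4 by ring] at u1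
    have u2 := cc (k + 2) (n + 1)
    rw [show n + 1 + 1 = n + 2 by ring, show k + 2 + 2 = k + 4 by ring] at u2
    have h1 := cform k n
    have h3 := cform (k + 2) n
    rw [show k + 2 + 2 = k + 4 by ring, show k + 2 + 1 = k + 3 by ring] at h3
    have H := aux_w (D (k + 1) n - D k n) (D (k + 1) (n + 1) - D k (n + 1))
      (D (k + 1) (n + 2) - D k (n + 2))
      (D (k + 2) n - D (k + 1) n) (D (k + 2) (n + 1) - D (k + 1) (n + 1))
      (D (k + 2) (n + 2) - D (k + 1) (n + 2))
      (D (k + 3) n - D (k + 2) n) (D (k + 3) (n + 1) - D (k + 2) (n + 1))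
      (D (k + 3) (n + 2) - D (k + 2) (n + 2))
      (D (k + 2) (n + 2) - D k (n + 2)) (D (k + 3) (n + 2) - D (k + 1) (n + 2))
      (D (k + 4) (n + 2) - D (k + 2) (n + 2))
      h1 h3 (by linarith) (by linarith) (by linarith) (by linarith) (by linarith) (by linarith)
    linarith
  -- the Δ-formula (second direction)
  have delta : ∀ m n : ℤ, D m (n + 3) + D m n - D m (n + 1) - D m (n + 2) =
      (D m n - D (m - 1) n) +
        max (D (m - 1) (n + 1) - D m (n + 1)) (D (m - 1) (n + 2) - D m (n + 2)) := by
    intro m n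
    have A := e₁ (m - 1) (n + 1)
    rw [show m - 1 + 1 = m by ring, show n + 1 + 2 = n + 3 by ring,
      show n + 1 + 1 = n + 2 by ring, show n + 1 - 1 = n by ring] at A
    rcases le_total (D m (n + 2) + D (m - 1) (n + 1)) (D m (n + 1) + D (m - 1) (n + 2)) with h | h
    · rw [max_eq_right h] at A
      rw [max_eq_right (show D (m - 1) (n + 1) - D m (n + 1) ≤ D (m - 1) (n + 2) - D m (n + 2)
        by linarith)]
      linarith
    · rw [max_eq_left h] at A
      rw [max_eq_left (show D (m - 1) (n + 2) - D m (n + 2) ≤ D (m - 1) (n + 1) - D m (n + 1)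
        by linarith)]
      linarith
  constructor
  · intro m n
    have W0 := winv m n
    have W1 := winv (m + 1) n
    rw [show m + 1 + 4 = m + 5 by ring, show m + 1 + 3 = m + 4 by ring,
      show m + 1 + 2 = m + 3 by ring, show m + 1 + 1 = m + 2 by ring] at W1
    have W2 := winv (m + 2) n
    rw [show m + 2 + 4 = m + 6 by ring, show m + 2 + 3 = m + 5 by ring,
      show m + 2 + 2 = m + 4 by ring, show m + 2 + 1 = m + 3 by ring] at W2
    linarith
  · intro m n
    have d1 := delta m n
    have d2 := delta m (n + 3)
    rw [show n + 3 + 3 = n + 6 by ring, show n + 3 + 1 = n + 4 by ring,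
      show n + 3 + 2 = n + 5 by ring] at d2
    have p1 : D (m - 1) (n + 4) - D m (n + 4) = D (m - 1) (n + 1) - D m (n + 1) := by
      have := hper' m (n + 1); rw [show n + 1 + 3 = n + 4 by ring] at this; linarith
    have p2 : D (m - 1) (n + 5) - D m (n + 5) = D (m - 1) (n + 2) - D m (n + 2) := by
      have := hper' m (n + 2); rw [show n + 2 + 3 = n + 5 by ring] at this; linarith
    rw [p1, p2] at d2
    have p0 := hper' m n
    linarith
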